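/- Under the strictly positive density assumption (every joint configuration of finitely-valued features X has positive probability), there exists a unique minimal stable variable set D(Y) (a set S with E[Y|S] = E[Y|X] a.s. such that no proper subset has this property), and the collection of all stable variable sets is exactly {S ⊆ X : D(Y) ⊆ S}. -/

import Mathlib

open MeasureTheory

/-- The sigma-algebra generated by the coordinates of `X` indexed by `S`. -/
def coordSigma {Ω : Type*} {d : ℕ} {α : Fin d → Type*}
    [∀ i, MeasurableSpace (α i)] (X : ∀ i, Ω → α i) (S : Set (Fin d)) :
    MeasurableSpace Ω :=
  MeasurableSpace.comap (fun ω => fun i : S => X i ω) MeasurableSpace.pi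

/-- `S` is a stable variable set for `Y`: `E[Y|S] = E[Y|X]` a.s. -/
def IsStableSet {Ω : Type*} [MeasurableSpace Ω] (μ : Measure Ω)
    {d : ℕ} {α : Fin d → Type*} [∀ i, MeasurableSpace (α i)]
    (X : ∀ i, Ω → α i) (Y : Ω → ℝ) (S : Set (Fin d)) : Prop :=
  μ[Y | coordSigma X S] =ᵐ[μ] μ[Y | coordSigma X Set.univ]

/-!
Under positive density every configuration `x` of `X` occurs, so `E[Y|X]` is a genuine function
`G` of the configuration, and `S` is stable exactly when `G` depends only on the coordinates in
`S`; positivity of the atoms is what turns the a.s. equality `E[Y|S] = E[Y|X]` into this pointwise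
statement. The index sets on which a function of a product depends form a filter (mixing two
configurations coordinatewise shows closure under intersection), and a filter on the finite set of
indices is principal: its kernel is `D(Y)`.
-/

section DependsOn

variable {ι : Type*} {α : ι → Type*} {β : Type*}

theorem DependsOn.inter {f : (∀ i, α i) → β} {s t : Set ι} (hs : DependsOn f s)
    (ht : DependsOn f t) : DependsOn f (s ∩ t) := by
  classical
  intro x y hxy
  calc f x = f (s.piecewise x y) := hs fun i hi => by simp [hi]
    _ = f y := ht fun i hi => by
      by_cases his : i ∈ s
      · simpa [his] using hxy i ⟨his, hi⟩
      · simp [his]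

variable (f : (∀ i, α i) → β)

def dependsOnFilter : Filter ι where
  sets := {s | DependsOn f s}
  univ_sets := dependsOn_univ f
  sets_of_superset hs hst := hs.mono hst
  inter_sets hs ht := hs.inter ht

theorem mem_dependsOnFilter {s : Set ι} : s ∈ dependsOnFilter f ↔ DependsOn f s := Iff.rfl

end DependsOn

theorem Filter.mem_iff_ker_subset {ι : Type*} [Finite ι] (l : Filter ι) {s : Set ι} :
    s ∈ l ↔ l.ker ⊆ s :=
  ⟨fun hs => Set.sInter_subset_of_mem hs,
    Filter.mem_of_superset ((Filter.sInter_mem (Set.toFinite _)).2 fun _ => id)⟩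

theorem minimal_iff_eq_of_forall_iff_subset {ι : Type*} {P : Set ι → Prop} {D : Set ι}
    (hP : ∀ S, P S ↔ D ⊆ S) (D' : Set ι) : (P D' ∧ ∀ S, S ⊂ D' → ¬ P S) ↔ D' = D := by
  constructor
  · rintro ⟨hD', hmin⟩
    have hDD' : D ⊆ D' := (hP D').1 hD'
    by_contra hne
    exact hmin D (hDD'.ssubset_of_ne (Ne.symm hne)) ((hP D).2 subset_rfl)
  · rintro rfl
    exact ⟨(hP D').2 subset_rfl, fun S hS h => hS.not_subset ((hP S).1 h)⟩

section coordSigma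

variable {Ω : Type*} {d : ℕ} {α : Fin d → Type*} [∀ i, MeasurableSpace (α i)]
  (X : ∀ i, Ω → α i)

theorem coordSigma_mono {S T : Set (Fin d)} (hST : S ⊆ T) :
    coordSigma X S ≤ coordSigma X T :=
  measurable_iff_comap_le.mp <| @measurable_pi_lambda _ _ _ (coordSigma X T) _ _ fun i =>
      (measurable_pi_apply (⟨i.1, hST i.2⟩ : T)).comp (comap_measurable fun ω (j : T) => X j ω)

theorem coordSigma_le [MeasurableSpace Ω] (hX : ∀ i, Measurable (X i)) (S : Set (Fin d)) :
    coordSigma X S ≤ ‹MeasurableSpace Ω› :=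
  measurable_iff_comap_le.mp (measurable_pi_lambda _ fun i => hX i)

variable {X}

theorem eq_of_measurable_coordSigma {β : Type*} [MeasurableSpace β] [MeasurableSingletonClass β]
    {S : Set (Fin d)} {f : Ω → β} (hf : Measurable[coordSigma X S] f) {ω ω' : Ω}
    (h : ∀ i ∈ S, X i ω = X i ω') : f ω = f ω' := by
  obtain ⟨t, -, ht⟩ := hf (measurableSet_singleton (f ω'))
  have hXω : (fun i : S => X i ω) = fun i : S => X i ω' := funext fun i => h i i.2
  change ω ∈ f ⁻¹' {f ω'}
  rw [← ht, Set.mem_preimage, hXω]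
  exact (Set.ext_iff.1 ht ω').2 rfl

theorem measurable_coordSigma_of_forall_eq [∀ i, Finite (α i)]
    [∀ i, MeasurableSingletonClass (α i)] {β : Type*} [MeasurableSpace β]
    {S : Set (Fin d)} {f : Ω → β} (h : ∀ ω ω', (∀ i ∈ S, X i ω = X i ω') → f ω = f ω') :
    Measurable[coordSigma X S] f := by
  intro B _
  refine ⟨(fun ω (i : S) => X i ω) '' (f ⁻¹' B), (Set.toFinite _).measurableSet, ?_⟩
  ext ω
  refine ⟨fun ⟨ω', hω', hX⟩ => ?_, fun hω => ⟨ω, hω, rfl⟩⟩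
  rwa [Set.mem_preimage, h ω ω' fun i hi => (congrFun hX ⟨i, hi⟩).symm]

theorem measurable_coordSigma_iff_dependsOn [∀ i, Finite (α i)]
    [∀ i, MeasurableSingletonClass (α i)] {β : Type*} [MeasurableSpace β]
    [MeasurableSingletonClass β] {w : (∀ i, α i) → Ω} (hw : ∀ x i, X i (w x) = x i)
    {f : Ω → β} (hf : Measurable[coordSigma X Set.univ] f) (S : Set (Fin d)) :
    Measurable[coordSigma X S] f ↔ DependsOn (f ∘ w) S := by
  have hfw : ∀ ω, f (w fun i => X i ω) = f ω := fun ω =>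
    eq_of_measurable_coordSigma hf fun i _ => hw _ i
  refine ⟨fun hfS x y hxy => ?_, fun hS => measurable_coordSigma_of_forall_eq fun ω ω' h => ?_⟩
  · exact eq_of_measurable_coordSigma hfS fun i hi => by simp only [hw, hxy i hi]
  · rw [← hfw ω, ← hfw ω']
    exact hS h

/-- Each atom `{X = x}` has positive mass, so it meets the set where `f = g`. -/
theorem eq_of_ae_eq_of_measurable_coordSigma_univ [MeasurableSpace Ω] {μ : Measure Ω}
    (hpos : ∀ x : ∀ i, α i, μ {ω | ∀ i, X i ω = x i} ≠ 0) {β : Type*} [MeasurableSpace β]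
    [MeasurableSingletonClass β] {f g : Ω → β} (hf : Measurable[coordSigma X Set.univ] f)
    (hg : Measurable[coordSigma X Set.univ] g) (hfg : f =ᵐ[μ] g) : f = g := by
  funext ω
  obtain ⟨ω', hω', hfgω'⟩ :=
    Measure.exists_mem_of_measure_ne_zero_of_ae (hpos fun i => X i ω) (ae_restrict_of_ae hfg)
  have hXω : ∀ i ∈ Set.univ, X i ω = X i ω' := fun i _ => (hω' i).symm
  rw [eq_of_measurable_coordSigma hf hXω, eq_of_measurable_coordSigma hg hXω, hfgω']

end coordSigma

theorem isStableSet_iff_measurable {Ω : Type*} [MeasurableSpace Ω] {μ : Measure Ω}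
    [IsFiniteMeasure μ] {d : ℕ} {α : Fin d → Type*} [∀ i, MeasurableSpace (α i)]
    {X : ∀ i, Ω → α i} (hX : ∀ i, Measurable (X i))
    (hpos : ∀ x : ∀ i, α i, μ {ω | ∀ i, X i ω = x i} ≠ 0) (Y : Ω → ℝ) (S : Set (Fin d)) :
    IsStableSet μ X Y S ↔ Measurable[coordSigma X S] (μ[Y | coordSigma X Set.univ]) := by
  constructor
  · intro hS
    rw [← eq_of_ae_eq_of_measurable_coordSigma_univ hpos
      (stronglyMeasurable_condExp.measurable.mono (coordSigma_mono X S.subset_univ) le_rfl)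
      stronglyMeasurable_condExp.measurable hS]
    exact stronglyMeasurable_condExp.measurable
  · intro hmeas
    calc μ[Y | coordSigma X S]
        =ᵐ[μ] μ[μ[Y | coordSigma X Set.univ] | coordSigma X S] :=
          (condExp_condExp_of_le (coordSigma_mono X S.subset_univ) (coordSigma_le X hX _)).symm
      _ = μ[Y | coordSigma X Set.univ] :=
          condExp_of_stronglyMeasurable (coordSigma_le X hX S) hmeas.stronglyMeasurable
            integrable_condExp

theorem stmt1_general {Ω : Type*} [MeasurableSpace Ω] (μ : Measure Ω) [IsProbabilityMeasure μ]
    {d : ℕ} {α : Fin d → Type*} [∀ i, Fintype (α i)] [∀ i, MeasurableSpace (α i)]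
    [∀ i, MeasurableSingletonClass (α i)]
    (X : ∀ i, Ω → α i) (hX : ∀ i, Measurable (X i))
    (Y : Ω → ℝ)
    (hpos : ∀ x : ∀ i, α i, μ {ω | ∀ i, X i ω = x i} ≠ 0) :
    ∃ D : Set (Fin d),
      (IsStableSet μ X Y D ∧ ∀ S : Set (Fin d), S ⊂ D → ¬ IsStableSet μ X Y S) ∧
      (∀ D' : Set (Fin d),
        (IsStableSet μ X Y D' ∧ ∀ S : Set (Fin d), S ⊂ D' → ¬ IsStableSet μ X Y S) → D' = D) ∧
      (∀ S : Set (Fin d), IsStableSet μ X Y S ↔ D ⊆ S) := by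
  choose w hw using fun x => nonempty_of_measure_ne_zero (hpos x)
  set G := μ[Y | coordSigma X Set.univ] ∘ w
  have hstable : ∀ S, IsStableSet μ X Y S ↔ (dependsOnFilter G).ker ⊆ S := fun S => by
    rw [isStableSet_iff_measurable hX hpos,
      measurable_coordSigma_iff_dependsOn hw stronglyMeasurable_condExp.measurable,
      ← mem_dependsOnFilter, Filter.mem_iff_ker_subset]
  exact ⟨_, (minimal_iff_eq_of_forall_iff_subset hstable _).2 rfl,
    fun D' => (minimal_iff_eq_of_forall_iff_subset hstable D').1, hstable⟩

/-- Existence and uniqueness of the minimal stable variable set, and the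
characterization of all stable variable sets as its supersets. -/
theorem stmt1 {Ω : Type*} [MeasurableSpace Ω] (μ : Measure Ω) [IsProbabilityMeasure μ]
    {d : ℕ} {α : Fin d → Type*} [∀ i, Fintype (α i)] [∀ i, MeasurableSpace (α i)]
    [∀ i, MeasurableSingletonClass (α i)]
    (X : ∀ i, Ω → α i) (hX : ∀ i, Measurable (X i))
    (Y : Ω → ℝ) (hYm : Measurable Y) (hY : Integrable Y μ)
    (hpos : ∀ x : ∀ i, α i, μ {ω | ∀ i, X i ω = x i} ≠ 0) :
    ∃ D : Set (Fin d),
      (IsStableSet μ X Y D ∧ ∀ S : Set (Fin d), S ⊂ D → ¬ IsStableSet μ X Y S) ∧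
      (∀ D' : Set (Fin d),
        (IsStableSet μ X Y D' ∧ ∀ S : Set (Fin d), S ⊂ D' → ¬ IsStableSet μ X Y S) → D' = D) ∧
      (∀ S : Set (Fin d), IsStableSet μ X Y S ↔ D ⊆ S) :=
  stmt1_general μ X hX Y hpos
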